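/- The squared Euclidean norm of the vector A^{−1} e_{(0,0,0)} equals ((1+e^{−1/q})/(1−e^{−3}))² · (1−e^{−6})/(1−e^{−2/q}). -/

import Mathlib

open Matrix

noncomputable section

/-- The step function underlying the permutation matrix `P`: it sends the index `(j, x)`
to `((j+1) mod 3q, π_{j+1}(x))` for `0 ≤ j < q`, to `(j+1, x)` for `q ≤ j < 2q`, and to
`((j+1) mod 3q, π_{3q−j}⁻¹(x))` for `2q ≤ j < 3q` (here `π` is 0-indexed). -/
def stepFn (q N : ℕ) (π : Fin q → Equiv.Perm (Fin N)) :
    Fin (3 * q) × Fin N → Fin (3 * q) × Fin N := fun p =>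
  if h : (p.1 : ℕ) < q then
    (⟨((p.1 : ℕ) + 1) % (3 * q), Nat.mod_lt _ ((Nat.zero_le _).trans_lt p.1.isLt)⟩,
      π ⟨(p.1 : ℕ), h⟩ p.2)
  else if h2 : (p.1 : ℕ) < 2 * q then
    (⟨((p.1 : ℕ) + 1) % (3 * q), Nat.mod_lt _ ((Nat.zero_le _).trans_lt p.1.isLt)⟩, p.2)
  else
    (⟨((p.1 : ℕ) + 1) % (3 * q), Nat.mod_lt _ ((Nat.zero_le _).trans_lt p.1.isLt)⟩,
      (π ⟨3 * q - 1 - (p.1 : ℕ), by have := p.1.isLt; omega⟩)⁻¹ p.2)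

/-- The `3qN × 3qN` permutation matrix `P`, sending basis vector `e_{(j,x)}` to
`e_{stepFn (j,x)}`. -/
def permMat (q N : ℕ) (π : Fin q → Equiv.Perm (Fin N)) :
    Matrix (Fin (3 * q) × Fin N) (Fin (3 * q) × Fin N) ℂ :=
  Matrix.of fun r c => if r = stepFn q N π c then 1 else 0

/-- The inverse `P⁻¹` of the permutation matrix `P`, sending `e_{stepFn (j,x)}` to
`e_{(j,x)}`. -/
def permMatInv (q N : ℕ) (π : Fin q → Equiv.Perm (Fin N)) :
    Matrix (Fin (3 * q) × Fin N) (Fin (3 * q) × Fin N) ℂ :=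
  Matrix.of fun r c => if stepFn q N π r = c then 1 else 0

/-- The `6qN × 6qN` matrix
`A = (1+e^{−1/q})⁻¹ (|0⟩⟨1| ⊗ (I − e^{−1/q} P) + |1⟩⟨0| ⊗ (I − e^{−1/q} P⁻¹))`. -/
def qlspMat (q N : ℕ) (π : Fin q → Equiv.Perm (Fin N)) :
    Matrix (Fin 2 × Fin (3 * q) × Fin N) (Fin 2 × Fin (3 * q) × Fin N) ℂ :=
  Matrix.of fun r c =>
    ((((1 : ℝ) + Real.exp (-1 / q)) : ℝ) : ℂ)⁻¹ *
      (if r.1 = 0 ∧ c.1 = 1 then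
        ((1 : Matrix (Fin (3 * q) × Fin N) (Fin (3 * q) × Fin N) ℂ)
            - (Real.exp (-1 / q) : ℂ) • permMat q N π) r.2 c.2
      else if r.1 = 1 ∧ c.1 = 0 then
        ((1 : Matrix (Fin (3 * q) × Fin N) (Fin (3 * q) × Fin N) ℂ)
            - (Real.exp (-1 / q) : ℂ) • permMatInv q N π) r.2 c.2
      else 0)

/-!
Write `t = e^{-1/q}` and `c = 1 + t`. Then `A = c⁻¹ (|0⟩⟨1| ⊗ (I - tP) + |1⟩⟨0| ⊗ (I - tP⁻¹))`,
so `A⁻¹ = c (|0⟩⟨1| ⊗ (I - tP⁻¹)⁻¹ + |1⟩⟨0| ⊗ (I - tP)⁻¹)` and `A⁻¹ e_{(0,0,0)}` is `c` times the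
column `(I - tP)⁻¹ e_{(0,0)}`. The matrix `P` permutes the basis along a permutation `σ` that
moves column `j` to column `j + 1 mod 3q`; along one full turn the second coordinate undergoes
`π_1⁻¹ ⋯ π_q⁻¹ π_q ⋯ π_1 = 1`, so `σ ^ (3q) = 1`. Hence
`(I - tP)⁻¹ = (1 - t^{3q})⁻¹ ∑_{k < 3q} t^k P^k`, and the vectors `P^k e_{(0,0)}`, `k < 3q`, are
distinct basis vectors since they lie in distinct columns. The squared norm is therefore
`c² (1 - e^{-3})⁻² ∑_{k < 3q} e^{-2k/q}`.
-/

open Finset Equiv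

theorem one_sub_smul_mul_geom_sum_eq_one {K A : Type*} [Field K] [Ring A] [Algebra K A] {a : A}
    {n : ℕ} (ha : a ^ n = 1) {t : K} (ht : t ^ n ≠ 1) :
    (1 - t • a) * ((1 - t ^ n)⁻¹ • ∑ k ∈ range n, (t • a) ^ k) = 1 := by
  rw [mul_smul_comm, mul_neg_geom_sum, smul_pow, ha, ← one_smul K (1 : A), smul_smul, mul_one,
    ← sub_smul, smul_smul, inv_mul_cancel₀ (sub_ne_zero.2 ht.symm), one_smul]

theorem sum_norm_sq_sum_ite_eq {ι κ E : Type*} [Fintype ι] [DecidableEq ι]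
    [SeminormedAddCommGroup E] {f : κ → ι} {s : Finset κ} (hf : Set.InjOn f s) (c : κ → E) :
    ∑ p, ‖∑ k ∈ s, if p = f k then c k else 0‖ ^ 2 = ∑ k ∈ s, ‖c k‖ ^ 2 := by
  calc ∑ p, ‖∑ k ∈ s, if p = f k then c k else 0‖ ^ 2
      = ∑ p ∈ s.image f, ‖∑ k ∈ s, if p = f k then c k else 0‖ ^ 2 := by
        refine (sum_subset (subset_univ _) fun p _ hp => ?_).symm
        rw [sum_eq_zero fun k hk => if_neg fun h => hp (mem_image.2 ⟨k, hk, h.symm⟩), norm_zero,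
          zero_pow two_ne_zero]
    _ = ∑ k ∈ s, ‖∑ l ∈ s, if f k = f l then c l else 0‖ ^ 2 :=
        sum_image fun _ hk _ hl h => hf hk hl h
    _ = ∑ k ∈ s, ‖c k‖ ^ 2 := sum_congr rfl fun k hk => by
        rw [sum_eq_single_of_mem k hk fun l hl hlk => if_neg fun h => hlk (hf hl hk h.symm),
          if_pos rfl]

section AntidiagBlock

variable {ι R : Type*}

def antidiagBlock [Zero R] (X Y : Matrix ι ι R) : Matrix (Fin 2 × ι) (Fin 2 × ι) R :=
  of fun r c => if r.1 = 0 ∧ c.1 = 1 then X r.2 c.2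
    else if r.1 = 1 ∧ c.1 = 0 then Y r.2 c.2 else 0

theorem antidiagBlock_mul_antidiagBlock_eq_one [Fintype ι] [DecidableEq ι] [Semiring R]
    {X Y X' Y' : Matrix ι ι R} (hX : X * Y' = 1) (hY : Y * X' = 1) :
    antidiagBlock X Y * antidiagBlock X' Y' = 1 := by
  ext ⟨a, i⟩ ⟨b, j⟩
  rw [mul_apply, Fintype.sum_prod_type, Fin.sum_univ_two]
  fin_cases a <;> fin_cases b <;> simp [antidiagBlock, one_apply, ← mul_apply, hX, hY]

theorem sum_norm_sq_smul_antidiagBlock_apply_zero [Fintype ι] [NormedField R] (c : R)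
    (X Y : Matrix ι ι R) (i : ι) :
    ∑ p, ‖(c • antidiagBlock X Y) p (0, i)‖ ^ 2 = ‖c‖ ^ 2 * ∑ j, ‖Y j i‖ ^ 2 := by
  simp [antidiagBlock, Fintype.sum_prod_type, Fin.sum_univ_two, mul_pow, mul_sum]

end AntidiagBlock

section PermMatrix

variable {ι K : Type*} [Fintype ι] [DecidableEq ι]

theorem permMatrix_pow [Semiring K] (σ : Perm ι) (k : ℕ) :
    σ.permMatrix K ^ k = (σ ^ k).permMatrix K := by
  induction k with
  | zero => simp
  | succ k ih => rw [pow_succ', ih, pow_succ, permMatrix_mul]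

theorem inv_one_sub_smul_permMatrix [Field K] {σ : Perm ι} {n : ℕ} (hσ : σ ^ n = 1) {t : K}
    (ht : t ^ n ≠ 1) :
    (1 - t • σ.permMatrix K)⁻¹ = (1 - t ^ n)⁻¹ • ∑ k ∈ range n, (t • σ.permMatrix K) ^ k :=
  Matrix.inv_eq_right_inv <| one_sub_smul_mul_geom_sum_eq_one
    (by rw [permMatrix_pow, hσ, permMatrix_one]) ht

theorem one_sub_smul_permMatrix_mul_inv [Field K] {σ : Perm ι} {n : ℕ} (hσ : σ ^ n = 1) {t : K}
    (ht : t ^ n ≠ 1) : (1 - t • σ.permMatrix K) * (1 - t • σ.permMatrix K)⁻¹ = 1 := by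
  rw [inv_one_sub_smul_permMatrix hσ ht]
  exact one_sub_smul_mul_geom_sum_eq_one (by rw [permMatrix_pow, hσ, permMatrix_one]) ht

theorem sum_norm_sq_inv_one_sub_smul_permMatrix_apply [NormedField K] {σ : Perm ι} {n : ℕ}
    (hσ : σ ^ n = 1) {t : K} (ht : t ^ n ≠ 1) (i : ι)
    (hinj : Set.InjOn (fun k => (σ ^ k) i) (range n)) :
    ∑ j, ‖(1 - t • σ⁻¹.permMatrix K)⁻¹ j i‖ ^ 2 =
      (‖1 - t ^ n‖ ^ 2)⁻¹ * ∑ k ∈ range n, (‖t‖ ^ 2) ^ k := by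
  have hσ' : σ⁻¹ ^ n = 1 := by rw [inv_pow, hσ, inv_one]
  have hcol (j : ι) : (∑ k ∈ range n, (t • σ⁻¹.permMatrix K) ^ k) j i =
      ∑ k ∈ range n, if j = (σ ^ k) i then t ^ k else 0 := by
    simp [Matrix.sum_apply, smul_pow, permMatrix_pow, PEquiv.toMatrix_apply, Equiv.symm_apply_eq]
  simp only [inv_one_sub_smul_permMatrix hσ' ht, Matrix.smul_apply, smul_eq_mul, norm_mul, mul_pow,
    ← mul_sum, hcol, sum_norm_sq_sum_ite_eq hinj, norm_inv, inv_pow, norm_pow, ← pow_mul, mul_comm]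

end PermMatrix

theorem val_finRotate_pow_apply {n : ℕ} (k : ℕ) (i : Fin n) :
    ((finRotate n ^ k) i : ℕ) = (i + k) % n := by
  induction k with
  | zero => simp [Nat.mod_eq_of_lt i.isLt]
  | succ k ih =>
    have := i.neZero
    rw [pow_succ', Perm.mul_apply, finRotate_apply, Fin.val_add, ih, Fin.val_one',
      Nat.add_mod_mod, Nat.mod_add_mod, add_assoc]

namespace QLSP

variable {q N : ℕ} (π : Fin q → Perm (Fin N))

def colPerm (j : Fin (3 * q)) : Perm (Fin N) :=
  if h : (j : ℕ) < q then π ⟨j, h⟩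
  else if _ : (j : ℕ) < 2 * q then 1
  else (π ⟨3 * q - 1 - j, by have := j.isLt; omega⟩)⁻¹

def stepPerm : Perm (Fin (3 * q) × Fin N) :=
  prodShear (finRotate (3 * q)) (colPerm π)

theorem stepFn_eq_stepPerm : stepFn q N π = stepPerm π := by
  ext p
  · have h := val_finRotate_pow_apply 1 p.1
    rw [pow_one] at h
    simp only [stepFn, stepPerm, prodShear_apply, h]
    split_ifs <;> rfl
  · simp only [stepFn, stepPerm, prodShear_apply, colPerm]
    split_ifs <;> rfl

def orbitWord (j : Fin (3 * q)) : ℕ → Perm (Fin N)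
  | 0 => 1
  | k + 1 => colPerm π ((finRotate _ ^ k) j) * orbitWord j k

theorem stepPerm_pow_apply (k : ℕ) (j : Fin (3 * q)) (x : Fin N) :
    (stepPerm π ^ k) (j, x) = ((finRotate _ ^ k) j, orbitWord π j k x) := by
  induction k with
  | zero => rfl
  | succ k ih => rw [pow_succ', Perm.mul_apply, ih, pow_succ', Perm.mul_apply]; rfl

theorem finRotate_pow_apply_zero (h₀ : 0 < 3 * q) {k : ℕ} (hk : k < 3 * q) :
    (finRotate _ ^ k) (⟨0, h₀⟩ : Fin (3 * q)) = ⟨k, hk⟩ :=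
  Fin.ext <| by rw [val_finRotate_pow_apply, zero_add, Nat.mod_eq_of_lt hk]

theorem orbitWord_succ (h₀ : 0 < 3 * q) {k : ℕ} (hk : k < 3 * q) :
    orbitWord π ⟨0, h₀⟩ (k + 1) = colPerm π ⟨k, hk⟩ * orbitWord π ⟨0, h₀⟩ k := by
  rw [orbitWord, finRotate_pow_apply_zero h₀ hk]

theorem orbitWord_add_of_le (h₀ : 0 < 3 * q) {i : ℕ} (hi : i ≤ q) :
    orbitWord π ⟨0, h₀⟩ (q + i) = orbitWord π ⟨0, h₀⟩ q := by
  induction i with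
  | zero => rfl
  | succ i ih =>
    rw [← add_assoc, orbitWord_succ π h₀ (by omega), ih (by omega), colPerm,
      dif_neg (by simp), dif_pos (by simp only; omega), one_mul]

theorem orbitWord_two_mul_add (h₀ : 0 < 3 * q) {i : ℕ} (hi : i ≤ q) :
    orbitWord π ⟨0, h₀⟩ (2 * q + i) = orbitWord π ⟨0, h₀⟩ (q - i) := by
  induction i with
  | zero => rw [add_zero, two_mul, orbitWord_add_of_le π h₀ le_rfl]; rfl
  | succ i ih =>
    rw [← add_assoc, orbitWord_succ π h₀ (by omega), ih (by omega),
      show q - i = q - (i + 1) + 1 by omega, orbitWord_succ π h₀ (by omega), colPerm,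
      dif_neg (by simp only; omega), dif_neg (by simp only; omega), colPerm,
      dif_pos (by simp only; omega)]
    simp only [show 3 * q - 1 - (2 * q + i) = q - (i + 1) by omega, inv_mul_cancel_left]

theorem orbitWord_three_mul (h₀ : 0 < 3 * q) : orbitWord π ⟨0, h₀⟩ (3 * q) = 1 := by
  have h := orbitWord_two_mul_add π h₀ le_rfl
  rwa [show 2 * q + q = 3 * q by ring, Nat.sub_self] at h

theorem stepPerm_pow_three_mul : stepPerm π ^ (3 * q) = 1 := by
  ext ⟨j, x⟩ : 1
  have h₀ : 0 < 3 * q := j.pos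
  have hfix (y : Fin N) : (stepPerm π ^ (3 * q)) (⟨0, h₀⟩, y) = (⟨0, h₀⟩, y) := by
    rw [stepPerm_pow_apply, orbitWord_three_mul, Perm.one_apply]
    exact Prod.ext (Fin.ext <| by simp [val_finRotate_pow_apply]) rfl
  -- every point is reached from column `0`, and powers of `stepPerm π` commute
  have hj : (j, x) = (stepPerm π ^ (j : ℕ)) (⟨0, h₀⟩, (orbitWord π ⟨0, h₀⟩ j)⁻¹ x) := by
    simp [stepPerm_pow_apply, finRotate_pow_apply_zero h₀ j.isLt]
  rw [Perm.one_apply, hj, ← Perm.mul_apply, ← pow_add, add_comm, pow_add, Perm.mul_apply, hfix]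

theorem injOn_stepPerm_pow_apply_zero (h₀ : 0 < 3 * q) (x : Fin N) :
    Set.InjOn (fun k => (stepPerm π ^ k) (⟨0, h₀⟩, x)) (range (3 * q)) := by
  intro k hk l hl h
  have := congrArg (fun p => (p.1 : ℕ)) h
  simpa [stepPerm_pow_apply, val_finRotate_pow_apply, Nat.mod_eq_of_lt (mem_range.1 hk),
    Nat.mod_eq_of_lt (mem_range.1 hl)] using this

theorem permMat_eq_permMatrix : permMat q N π = (stepPerm π)⁻¹.permMatrix ℂ := by
  ext r c
  simp [permMat, stepFn_eq_stepPerm, PEquiv.toMatrix_apply, Equiv.symm_apply_eq, eq_comm (a := r)]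

theorem permMatInv_eq_permMatrix : permMatInv q N π = (stepPerm π).permMatrix ℂ := by
  ext r c
  simp [permMatInv, stepFn_eq_stepPerm, PEquiv.toMatrix_apply]

theorem qlspMat_eq_smul_antidiagBlock :
    qlspMat q N π = ((1 + Real.exp (-1 / q) : ℝ) : ℂ)⁻¹ •
      antidiagBlock (1 - (Real.exp (-1 / q) : ℂ) • (stepPerm π)⁻¹.permMatrix ℂ)
        (1 - (Real.exp (-1 / q) : ℂ) • (stepPerm π).permMatrix ℂ) := by
  ext r c
  simp only [qlspMat, antidiagBlock, permMat_eq_permMatrix, permMatInv_eq_permMatrix,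
    Matrix.smul_apply, of_apply, smul_eq_mul]

theorem exp_neg_inv_pow_three_mul (hq : 0 < q) :
    Real.exp (-1 / q) ^ (3 * q) = Real.exp (-3) := by
  rw [← Real.exp_nat_mul]
  congr 1
  push_cast
  field_simp

theorem ofReal_exp_neg_inv_pow_three_mul_ne_one (hq : 0 < q) :
    (Real.exp (-1 / q) : ℂ) ^ (3 * q) ≠ 1 := by
  rw [← Complex.ofReal_pow, exp_neg_inv_pow_three_mul hq, Ne, Complex.ofReal_eq_one,
    Real.exp_eq_one_iff]
  norm_num

theorem qlspMat_inv (hq : 0 < q) :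
    (qlspMat q N π)⁻¹ = ((1 + Real.exp (-1 / q) : ℝ) : ℂ) •
      antidiagBlock (1 - (Real.exp (-1 / q) : ℂ) • (stepPerm π).permMatrix ℂ)⁻¹
        (1 - (Real.exp (-1 / q) : ℂ) • (stepPerm π)⁻¹.permMatrix ℂ)⁻¹ := by
  have ht := ofReal_exp_neg_inv_pow_three_mul_ne_one hq
  have hσ : stepPerm π ^ (3 * q) = 1 := stepPerm_pow_three_mul π
  have hσ' : (stepPerm π)⁻¹ ^ (3 * q) = 1 := by rw [inv_pow, hσ, inv_one]
  refine Matrix.inv_eq_right_inv ?_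
  rw [qlspMat_eq_smul_antidiagBlock, smul_mul_smul_comm,
    inv_mul_cancel₀ (Complex.ofReal_ne_zero.2 (by positivity)), one_smul]
  exact antidiagBlock_mul_antidiagBlock_eq_one (one_sub_smul_permMatrix_mul_inv hσ' ht)
    (one_sub_smul_permMatrix_mul_inv hσ ht)

theorem norm_sq_geom_sum_eq_closed_form (hq : 0 < q) :
    ‖((1 + Real.exp (-1 / q) : ℝ) : ℂ)‖ ^ 2 *
      ((‖1 - (Real.exp (-1 / q) : ℂ) ^ (3 * q)‖ ^ 2)⁻¹ *
        ∑ k ∈ range (3 * q), (‖(Real.exp (-1 / q) : ℂ)‖ ^ 2) ^ k) =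
    ((1 + Real.exp (-1 / q)) / (1 - Real.exp (-3))) ^ 2 * (1 - Real.exp (-6)) /
      (1 - Real.exp (-2 / q)) := by
  have h2 : Real.exp (-1 / q) ^ 2 = Real.exp (-2 / q) := by
    rw [← Real.exp_nat_mul]; congr 1; push_cast; ring
  have h6 : Real.exp (-3) ^ 2 = Real.exp (-6) := by
    rw [← Real.exp_nat_mul]; norm_num
  have h3 : 1 - Real.exp (-3) ≠ 0 := (sub_pos.2 (Real.exp_lt_one_iff.2 (by norm_num))).ne'
  have h2q : Real.exp (-2 / q) < 1 :=
    Real.exp_lt_one_iff.2 (div_neg_of_neg_of_pos (by norm_num) (by positivity))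
  rw [← Complex.ofReal_pow, ← Complex.ofReal_one, ← Complex.ofReal_sub, Complex.norm_real,
    Complex.norm_real, Complex.norm_real, Real.norm_eq_abs, Real.norm_eq_abs, Real.norm_eq_abs,
    sq_abs, sq_abs, sq_abs, exp_neg_inv_pow_three_mul hq, geom_sum_eq (h2 ▸ h2q.ne), ← pow_mul,
    mul_comm 2, pow_mul, exp_neg_inv_pow_three_mul hq, ← h6, h2]
  have hb : Real.exp (-2 / q) - 1 ≠ 0 := by linarith
  have hb' : 1 - Real.exp (-2 / q) ≠ 0 := by linarith
  generalize Real.exp (-2 / q) = b at hb hb' ⊢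
  generalize Real.exp (-3) = a at h3 ⊢
  field_simp
  ring

end QLSP

/-- The squared Euclidean norm of the vector `A⁻¹ e_{(0,0,0)}` equals
`((1+e^{−1/q})/(1−e^{−3}))² · (1−e^{−6})/(1−e^{−2/q})`. -/
theorem qlspMat_inv_mulVec_single_norm_sq (q N : ℕ) (hq : 1 ≤ q) (hN : 1 ≤ N)
    (π : Fin q → Equiv.Perm (Fin N)) :
    ∑ p : Fin 2 × Fin (3 * q) × Fin N,
        ‖(qlspMat q N π)⁻¹.mulVec
          (Pi.single ((0 : Fin 2), (⟨0, by omega⟩ : Fin (3 * q)),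
            (⟨0, by omega⟩ : Fin N)) 1) p‖ ^ 2 =
      ((1 + Real.exp (-1 / q)) / (1 - Real.exp (-3))) ^ 2 *
        (1 - Real.exp (-6)) / (1 - Real.exp (-2 / q)) := by
  simp only [mulVec_single_one, col_apply]
  rw [QLSP.qlspMat_inv π hq, sum_norm_sq_smul_antidiagBlock_apply_zero,
    sum_norm_sq_inv_one_sub_smul_permMatrix_apply (QLSP.stepPerm_pow_three_mul π)
      (QLSP.ofReal_exp_neg_inv_pow_three_mul_ne_one hq) _
      (QLSP.injOn_stepPerm_pow_apply_zero π _ _), QLSP.norm_sq_geom_sum_eq_closed_form hq]
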